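/- arXiv:2004.02629 — 2 statements merged into one kernel-verified Lean document; each statement's English description precedes it below -/
import Mathlib

section
/- For n ≥ 3 candidates indexed by i ∈ {0,1,…,n−1} and n voters with preference relations ≻_k defined by i ≻_k j iff (i − k) mod n < (j − k) mod n, define the majority relation M by: i M j iff the number of voters k with i ≻_k j is strictly greater than n/2. Then M is not transitive, even though every individual relation ≻_k is transitive. -/
/-- Voter `k`'s preference relation in the generalized Condorcet paradox:
`i ≻ₖ j` iff `(i - k) mod n < (j - k) mod n` (subtraction in `Fin n` is mod `n`). -/
def condorcetPref (n : ℕ) (k i j : Fin n) : Prop := i - k < j - k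

instance (n : ℕ) (k i j : Fin n) : Decidable (condorcetPref n k i j) := by
  unfold condorcetPref; infer_instance

/-- The majority relation: `i M j` iff strictly more than `n / 2` of the `n` voters
prefer `i` to `j`. -/
def condorcetMaj (n : ℕ) (i j : Fin n) : Prop :=
  ((Finset.univ.filter (fun k : Fin n => condorcetPref n k i j)).card : ℝ) > n / 2

/-!
Voter `k` prefers `i` to `i + 1` unless `k = i + 1`, so `n - 1 > n / 2` voters do and
`i M (i + 1)` for every `i`. Going once around the cycle `0 M 1 M ⋯ M (n - 1) M 0`, a transitive
`M` would give `0 M 0`, yet no voter prefers a candidate to itself.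
-/

theorem Transitive.rel_add_succ_nsmul {G : Type*} [AddMonoid G] {r : G → G → Prop}
    (ht : Transitive r) {g : G} (h : ∀ x, r x (x + g)) (x : G) :
    ∀ j : ℕ, r x (x + (j + 1) • g)
  | 0 => by simpa using h x
  | j + 1 => by
    have := ht (ht.rel_add_succ_nsmul h x j) (h _)
    rwa [add_assoc, ← succ_nsmul] at this

theorem Transitive.rel_self_of_forall_rel_add {G : Type*} [AddGroup G] [Finite G]
    {r : G → G → Prop} (ht : Transitive r) {g : G} (h : ∀ x, r x (x + g)) (x : G) : r x x := by
  simpa [Nat.sub_add_cancel Nat.card_pos, card_nsmul_eq_zero'] using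
    ht.rel_add_succ_nsmul h x (Nat.card G - 1)

theorem Fin.lt_add_one_iff_add_one_ne_zero {m : ℕ} (a : Fin (m + 1)) :
    a < a + 1 ↔ a + 1 ≠ 0 := by
  rw [Fin.lt_add_one_iff, Fin.lt_last_iff_ne_last, ← Fin.last_add_one, Ne, Ne, add_left_inj]

theorem condorcetPref_transitive (n : ℕ) (k : Fin n) : Transitive (condorcetPref n k) :=
  fun _ _ _ => lt_trans

theorem condorcetMaj_irrefl (n : ℕ) (i : Fin n) : ¬ condorcetMaj n i i := by
  simp only [condorcetMaj, condorcetPref, lt_self_iff_false, Finset.filter_false,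
    Finset.card_empty, CharP.cast_eq_zero, gt_iff_lt, not_lt]
  positivity

theorem condorcetPref_add_one_iff {m : ℕ} (k i : Fin (m + 1)) :
    condorcetPref (m + 1) k i (i + 1) ↔ k ≠ i + 1 := by
  rw [condorcetPref, add_sub_right_comm, Fin.lt_add_one_iff_add_one_ne_zero,
    ← add_sub_right_comm, sub_ne_zero, ne_comm]

theorem condorcetMaj_add_one {m : ℕ} (hm : 2 ≤ m) (i : Fin (m + 1)) :
    condorcetMaj (m + 1) i (i + 1) := by
  have hvoters : Finset.univ.filter (fun k => condorcetPref (m + 1) k i (i + 1)) =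
      Finset.univ.erase (i + 1) := by
    ext k
    simp [condorcetPref_add_one_iff]
  rw [condorcetMaj, hvoters, Finset.card_erase_of_mem (Finset.mem_univ _), Finset.card_univ,
    Fintype.card_fin, Nat.add_sub_cancel]
  have : (2 : ℝ) ≤ m := by exact_mod_cast hm
  push_cast
  linarith

/-- Every individual preference relation is transitive, yet the majority relation
is not transitive (Condorcet's paradox, generalized). -/
theorem condorcetMaj_not_transitive (n : ℕ) (hn : 3 ≤ n) :
    (∀ k : Fin n, Transitive (condorcetPref n k)) ∧
    ¬ Transitive (condorcetMaj n) := by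
  refine ⟨condorcetPref_transitive n, fun ht => ?_⟩
  obtain ⟨m, rfl⟩ : ∃ m, n = m + 1 := ⟨n - 1, by omega⟩
  exact condorcetMaj_irrefl _ 0
    (ht.rel_self_of_forall_rel_add (condorcetMaj_add_one (by omega)) 0)
end

section
/- For n ≥ 3 candidates indexed by i ∈ {0,1,…,n−1} and n voters with preference relations ≻_k defined by i ≻_k j iff (i − k) mod n < (j − k) mod n, define the majority relation M by: i M j iff the number of voters k with i ≻_k j is strictly greater than n/2. Then M has no maximal element: for every candidate i there exists a candidate j with j M i (namely j = (i−1) mod n). In particular, no candidate is majority-preferred to all others. -/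
/-! Every voter other than `i` ranks `i` immediately after `i - 1`, so `i - 1` beats `i` by
`n - 1 > n / 2` votes. Individual preferences are strict orders, so two candidates cannot each
win a strict majority against the other; hence `i` cannot beat `i - 1`. -/

theorem condorcetPref_asymm {n : ℕ} {k i j : Fin n} (h : condorcetPref n k i j) :
    ¬ condorcetPref n k j i :=
  lt_asymm h

theorem Fin.sub_one_lt_self {n : ℕ} [NeZero n] {a : Fin n} (ha : a ≠ 0) : a - 1 < a := by
  obtain ⟨m, rfl⟩ := Nat.exists_eq_succ_of_ne_zero (NeZero.ne n)
  exact Fin.sub_one_lt_iff.mpr (Fin.pos_of_ne_zero ha)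

theorem Fin.sub_one_ne_self {n : ℕ} [NeZero n] (hn : 2 ≤ n) (i : Fin n) : i - 1 ≠ i := by
  rw [Ne, sub_eq_self, Fin.one_eq_zero_iff]
  omega

theorem condorcetPref_sub_one_iff {n : ℕ} [NeZero n] (k i : Fin n) :
    condorcetPref n k (i - 1) i ↔ k ≠ i := by
  unfold condorcetPref
  rw [sub_right_comm]
  constructor
  · rintro h rfl
    simp at h
  · intro hk
    exact Fin.sub_one_lt_self (sub_ne_zero.mpr hk.symm)

theorem card_condorcetPref_sub_one {n : ℕ} [NeZero n] (i : Fin n) :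
    (Finset.univ.filter (fun k : Fin n => condorcetPref n k (i - 1) i)).card = n - 1 := by
  simp only [condorcetPref_sub_one_iff, Finset.filter_ne', Finset.card_erase_of_mem,
    Finset.mem_univ, Finset.card_univ, Fintype.card_fin]

theorem condorcetMaj_sub_one {n : ℕ} [NeZero n] (hn : 3 ≤ n) (i : Fin n) :
    condorcetMaj n (i - 1) i := by
  have hn' : (3 : ℝ) ≤ n := by exact_mod_cast hn
  unfold condorcetMaj
  rw [card_condorcetPref_sub_one, Nat.cast_sub (by omega)]
  push_cast
  linarith

theorem condorcetMaj_asymm {n : ℕ} {i j : Fin n} (hij : condorcetMaj n i j) :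
    ¬ condorcetMaj n j i := by
  intro hji
  have hdisj : Disjoint (Finset.univ.filter fun k => condorcetPref n k i j)
      (Finset.univ.filter fun k => condorcetPref n k j i) :=
    Finset.disjoint_filter.mpr fun _ _ => condorcetPref_asymm
  have hcard := Finset.card_le_univ
    ((Finset.univ.filter fun k => condorcetPref n k i j) ∪
      Finset.univ.filter fun k => condorcetPref n k j i)
  rw [Finset.card_union_of_disjoint hdisj, Fintype.card_fin] at hcard
  unfold condorcetMaj at hij hji
  refine lt_irrefl (n : ℝ) ?_
  calc (n : ℝ) = n / 2 + n / 2 := by ring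
    _ < _ := add_lt_add hij hji
    _ ≤ n := by exact_mod_cast hcard

/-- The majority relation has no maximal element: every candidate `i` is majority-dominated
by some candidate `j`, namely `j = (i - 1) mod n`.  In particular no candidate is
majority-preferred to all others. -/
theorem condorcetMaj_no_maximal (n : ℕ) (hn : 3 ≤ n) [NeZero n] :
    (∀ i : Fin n, ∃ j : Fin n, j = i - 1 ∧ condorcetMaj n j i) ∧
    ¬ ∃ i : Fin n, ∀ j : Fin n, j ≠ i → condorcetMaj n i j := by
  refine ⟨fun i => ⟨i - 1, rfl, condorcetMaj_sub_one hn i⟩, ?_⟩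
  rintro ⟨i, hi⟩
  exact condorcetMaj_asymm (hi (i - 1) (Fin.sub_one_ne_self (by omega) i))
    (condorcetMaj_sub_one hn i)
end
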